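/- arXiv:2110.07173 — 6 statements merged into one kernel-verified Lean document; each statement's English description precedes it below -/
import Mathlib

section
/- Under the same assumptions, for d = n + l with 0 ≤ l ≤ n − 1, the quantity E := Σ_{j=d+1}^∞ |c_j| + Σ_{j=1}^∞ Σ_{i=2jn−d}^{2jn+d} |c_i| satisfies E ≤ 3 Σ_{i=n−l}^∞ |c_i|. -/
/-- Truncation-plus-aliasing error bound, case `d = n + l`, `0 ≤ l ≤ n - 1`:
`E := Σ_{j>d} |c_j| + Σ_{j≥1} Σ_{i=2jn-d}^{2jn+d} |c_i| ≤ 3 Σ_{i≥n-l} |c_i|`. -/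
theorem aliasing_error_bound_high (c c' : ℕ → ℝ) (n : ℕ) (hn : 1 ≤ n)
    (hsum : Summable fun j => |c j|)
    (halias : ∀ d : ℕ, d < 2 * n →
      c' d - c d = ∑' j : ℕ, (-1 : ℝ) ^ (j + 1) *
        (c (2 * (j + 1) * n - d) + c (2 * (j + 1) * n + d)))
    (l : ℕ) (hln : l ≤ n - 1) (d : ℕ) (hd : d = n + l) :
    (∑' j : ℕ, |c (d + 1 + j)|) +
      (∑' j : ℕ, ∑ i ∈ Finset.Icc (2 * (j + 1) * n - d) (2 * (j + 1) * n + d), |c i|)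
      ≤ 3 * ∑' i : ℕ, |c (n - l + i)| := by
  subst hd
  have hln' : l + 1 ≤ n := by omega
  set g : ℕ → ℝ := fun i => |c (n - l + i)| with hg
  have hsumg : Summable g := hsum.comp_injective (add_right_injective (n - l))
  have hS0 : 0 ≤ ∑' i, g i := tsum_nonneg (fun i => abs_nonneg _)
  have icc_split : ∀ a b m : ℕ, a ≤ b → b ≤ m →
      Finset.Icc a m = Finset.Icc a b ∪ Finset.Ioc b m := by
    intro a b m h1 h2
    ext x
    simp only [Finset.mem_Icc, Finset.mem_Ioc, Finset.mem_union]
    omega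
  have key : ∀ T : Finset ℕ, (∀ x ∈ T, n - l ≤ x) → ∑ x ∈ T, |c x| ≤ ∑' i, g i := by
    intro T hT
    have hinj : ∀ x ∈ T, ∀ y ∈ T, x - (n - l) = y - (n - l) → x = y := by
      intro x hx y hy hxy
      have := hT x hx; have := hT y hy
      omega
    have heq : ∑ k ∈ T.image (fun x => x - (n - l)), g k = ∑ x ∈ T, |c x| := by
      rw [Finset.sum_image hinj]
      apply Finset.sum_congr rfl
      intro x hx
      have hx' := hT x hx
      have h : n - l + (x - (n - l)) = x := by omega
      show |c (n - l + (x - (n - l)))| = |c x|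
      rw [h]
    rw [← heq]
    exact Summable.sum_le_tsum _ (fun i _ => abs_nonneg _) hsumg
  have hA : (∑' j : ℕ, |c (n + l + 1 + j)|) ≤ ∑' i, g i := by
    have heq : (∑' j : ℕ, |c (n + l + 1 + j)|) = ∑' j : ℕ, g (j + (2 * l + 1)) := by
      apply tsum_congr
      intro j
      have h : n - l + (j + (2 * l + 1)) = n + l + 1 + j := by omega
      show |c (n + l + 1 + j)| = |c (n - l + (j + (2 * l + 1)))|
      rw [h]
    rw [heq]
    have h := Summable.sum_add_tsum_nat_add (f := g) (2 * l + 1) hsumg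
    have hpos : 0 ≤ ∑ i ∈ Finset.range (2 * l + 1), g i :=
      Finset.sum_nonneg fun i _ => abs_nonneg _
    linarith
  have hB : (∑' j : ℕ, ∑ i ∈ Finset.Icc (2 * (j + 1) * n - (n + l)) (2 * (j + 1) * n + (n + l)), |c i|)
      ≤ 2 * ∑' i, g i := by
    apply Real.tsum_le_of_sum_range_le
      (fun j => Finset.sum_nonneg fun i _ => abs_nonneg _)
    intro N
    set P : ℕ → Finset ℕ := fun j => Finset.Icc (2 * (j + 1) * n - (n + l)) (2 * (j + 1) * n) with hP
    set Q : ℕ → Finset ℕ := fun j => Finset.Ioc (2 * (j + 1) * n) (2 * (j + 1) * n + (n + l)) with hQ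
    have hmul : ∀ j j' : ℕ, j < j' → 2 * (j + 1) * n + 2 * n ≤ 2 * (j' + 1) * n := by
      intro j j' hjj
      have h1 : 2 * (j + 2) * n ≤ 2 * (j' + 1) * n := Nat.mul_le_mul (by omega) (le_refl n)
      have he : 2 * (j + 2) * n = 2 * (j + 1) * n + 2 * n := by ring
      rw [he] at h1
      exact h1
    have hlow : ∀ j : ℕ, 2 * n ≤ 2 * (j + 1) * n := by
      intro j
      have : 2 * 1 * n ≤ 2 * (j + 1) * n := Nat.mul_le_mul (by omega) (le_refl n)
      simpa using this
    have hsplit : ∀ j, ∑ i ∈ Finset.Icc (2 * (j + 1) * n - (n + l)) (2 * (j + 1) * n + (n + l)), |c i|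
        = (∑ i ∈ P j, |c i|) + ∑ i ∈ Q j, |c i| := by
      intro j
      have h1 : 2 * (j + 1) * n - (n + l) ≤ 2 * (j + 1) * n := Nat.sub_le _ _
      have h2 : 2 * (j + 1) * n ≤ 2 * (j + 1) * n + (n + l) := Nat.le_add_right _ _
      have hdisj : Disjoint (P j) (Q j) := by
        simp only [hP, hQ, Finset.disjoint_left, Finset.mem_Icc, Finset.mem_Ioc]
        rintro x ⟨hx1, hx2⟩ ⟨hy1, hy2⟩
        exact absurd hx2 (not_le.mpr hy1)
      rw [icc_split _ _ _ h1 h2, Finset.sum_union hdisj]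
    have hPd : ∀ j j' : ℕ, j < j' → Disjoint (P j) (P j') := by
      intro j j' hjj
      have hm := hmul j j' hjj
      simp only [hP, Finset.disjoint_left, Finset.mem_Icc]
      rintro x ⟨hx1, hx2⟩ ⟨hy1, hy2⟩
      set A := 2 * (j + 1) * n with hA'
      set B := 2 * (j' + 1) * n with hB'
      omega
    have hQd : ∀ j j' : ℕ, j < j' → Disjoint (Q j) (Q j') := by
      intro j j' hjj
      have hm := hmul j j' hjj
      simp only [hQ, Finset.disjoint_left, Finset.mem_Ioc]
      rintro x ⟨hx1, hx2⟩ ⟨hy1, hy2⟩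
      set A := 2 * (j + 1) * n with hA'
      set B := 2 * (j' + 1) * n with hB'
      omega
    have pair : ∀ (R : ℕ → Finset ℕ), (∀ j j' : ℕ, j < j' → Disjoint (R j) (R j')) →
        Set.PairwiseDisjoint ↑(Finset.range N) R := by
      intro R hR x _ y _ hxy
      rcases lt_or_gt_of_ne hxy with h | h
      · exact hR _ _ h
      · exact (hR _ _ h).symm
    have hPs : ∑ j ∈ Finset.range N, ∑ i ∈ P j, |c i| ≤ ∑' i, g i := by
      rw [← Finset.sum_biUnion (pair P hPd)]
      apply key
      intro x hx
      simp only [Finset.mem_biUnion, hP, Finset.mem_Icc] at hx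
      obtain ⟨j, _, hx1, hx2⟩ := hx
      have h2n := hlow j
      set A := 2 * (j + 1) * n with hA'
      omega
    have hQs : ∑ j ∈ Finset.range N, ∑ i ∈ Q j, |c i| ≤ ∑' i, g i := by
      rw [← Finset.sum_biUnion (pair Q hQd)]
      apply key
      intro x hx
      simp only [Finset.mem_biUnion, hQ, Finset.mem_Ioc] at hx
      obtain ⟨j, _, hx1, hx2⟩ := hx
      have h2n := hlow j
      set A := 2 * (j + 1) * n with hA'
      omega
    calc ∑ j ∈ Finset.range N, ∑ i ∈ Finset.Icc (2 * (j + 1) * n - (n + l)) (2 * (j + 1) * n + (n + l)), |c i|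
        = ∑ j ∈ Finset.range N, ((∑ i ∈ P j, |c i|) + ∑ i ∈ Q j, |c i|) :=
          Finset.sum_congr rfl fun j _ => hsplit j
      _ = (∑ j ∈ Finset.range N, ∑ i ∈ P j, |c i|) + ∑ j ∈ Finset.range N, ∑ i ∈ Q j, |c i| :=
          Finset.sum_add_distrib
      _ ≤ (∑' i, g i) + ∑' i, g i := add_le_add hPs hQs
      _ = 2 * ∑' i, g i := by ring
  linarith
end

section
/- Let Q(z) = q_0 + q_1 z + … + q_{n_q} z^{n_q} with q_{n_q} ≠ 0 have zeros z_1,…,z_{n_q} (with multiplicity). Given δ > 0, there exist at most n_q closed disks whose radii sum to at most 2eδ, such that for every z outside their union, ∏_{j=1}^{n_q} |z − z_j| > δ^{n_q}. -/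
/-!
Cartan's selection with `h = eδ/n`: repeatedly take the largest `p` such that some closed ball of
radius `p h` contains at least `p` of the remaining zeros (it then contains exactly `p`), and
remove them. The disks of doubled radii `2 p h` have total radius `2 n h = 2eδ`. Outside them,
every closed ball of radius `k h` about `w` contains fewer than `k` zeros, so the `k`-th nearest
zero is at distance `> k h`, whence `∏ |w - z_j| > n! hⁿ ≥ δⁿ` because `nⁿ ≤ n! eⁿ`.
-/

open Finset
open scoped Nat

variable {X ι : Type*} [PseudoMetricSpace X]

def IsSparseAround (z : ι → X) (s : Finset ι) (h : ℝ) (w : X) : Prop :=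
  ∀ k : ℕ, 0 < k → #{j ∈ s | dist w (z j) ≤ k * h} < k

open Classical in
lemma exists_maximal_cluster (z : ι → X) {h : ℝ} (hh : 0 ≤ h) {s : Finset ι}
    (hs : s.Nonempty) :
    ∃ (p : ℕ) (c : X), 0 < p ∧ #{j ∈ s | dist c (z j) ≤ p * h} = p ∧
      ∀ k, p < k → ∀ c' : X, #{j ∈ s | dist c' (z j) ≤ k * h} < k := by
  let P : ℕ → Prop := fun p => ∃ c : X, p ≤ #{j ∈ s | dist c (z j) ≤ p * h}
  have hP1 : P 1 := by
    obtain ⟨j₀, hj₀⟩ := hs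
    exact ⟨z j₀, card_pos.2 ⟨j₀, by simp [hj₀, hh]⟩⟩
  have hmax : ∀ k, Nat.findGreatest P #s < k → ∀ c' : X,
      #{j ∈ s | dist c' (z j) ≤ k * h} < k := by
    intro k hk c'
    by_contra! hle
    exact Nat.findGreatest_is_greatest hk (hle.trans (card_filter_le _ _)) ⟨c', hle⟩
  have hs1 : 1 ≤ #s := card_pos.2 hs
  obtain ⟨c, hc⟩ := Nat.findGreatest_spec hs1 hP1
  refine ⟨_, c, Nat.le_findGreatest hs1 hP1, le_antisymm ?_ hc, hmax⟩
  have hmono : #{j ∈ s | dist c (z j) ≤ Nat.findGreatest P #s * h} ≤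
      #{j ∈ s | dist c (z j) ≤ ((Nat.findGreatest P #s + 1 : ℕ) : ℝ) * h} :=
    card_le_card <| monotone_filter_right _ fun j _ hj => hj.trans (by gcongr; simp)
  exact Nat.lt_succ_iff.1 (hmono.trans_lt (hmax _ (Nat.lt_succ_self _) c))

lemma IsSparseAround.of_sdiff_cluster [DecidableEq ι] {z : ι → X} {s : Finset ι} {h : ℝ} (hh : 0 ≤ h)
    {c : X} {p : ℕ} (hmax : ∀ k, p < k → ∀ c' : X, #{j ∈ s | dist c' (z j) ≤ k * h} < k)
    {w : X} (hsparse : IsSparseAround z (s \ {j ∈ s | dist c (z j) ≤ p * h}) h w)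
    (hw : 2 * p * h < dist w c) :
    IsSparseAround z s h w := by
  intro k hk
  rcases lt_or_ge p k with hpk | hkp
  · exact hmax k hpk w
  have hfar : ∀ j, dist w (z j) ≤ k * h → p * h < dist c (z j) := fun j hj => by
    have : (k : ℝ) * h ≤ p * h := by gcongr
    linarith [dist_triangle_right w c (z j)]
  calc #{j ∈ s | dist w (z j) ≤ k * h}
      = #{j ∈ s \ {j ∈ s | dist c (z j) ≤ p * h} | dist w (z j) ≤ k * h} := by
        congr 1; ext j
        simp only [mem_filter, mem_sdiff, not_and, not_le]
        exact ⟨fun hj => ⟨⟨hj.1, fun _ => hfar j hj.2⟩, hj.2⟩, fun hj => ⟨hj.1.1, hj.2⟩⟩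
    _ < k := hsparse k hk

theorem exists_disks_isSparseAround [DecidableEq ι] (z : ι → X) {h : ℝ} (hh : 0 ≤ h) (s : Finset ι) :
    ∃ (m : ℕ) (c : Fin m → X) (p : Fin m → ℕ), (∀ i, 0 < p i) ∧ ∑ i, p i = #s ∧
      ∀ w, (∀ i, 2 * p i * h < dist w (c i)) → IsSparseAround z s h w := by
  induction s using Finset.strongInduction with
  | H s ih =>
  rcases s.eq_empty_or_nonempty with rfl | hs
  · exact ⟨0, Fin.elim0, Fin.elim0, fun i => i.elim0, by simp, fun w _ k hk => by simpa⟩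
  obtain ⟨p₀, c₀, hp₀, hcard, hmax⟩ := exists_maximal_cluster z hh hs
  have hT : {j ∈ s | dist c₀ (z j) ≤ p₀ * h}.Nonempty := card_pos.1 (by rw [hcard]; exact hp₀)
  obtain ⟨m, c, p, hp, hsum, hsparse⟩ := ih _ (sdiff_ssubset (filter_subset _ _) hT)
  refine ⟨m + 1, Fin.cons c₀ c, Fin.cons p₀ p, Fin.forall_fin_succ.2 ⟨hp₀, hp⟩, ?_,
    fun w hw => ?_⟩
  · have := card_le_card (filter_subset (fun j => dist c₀ (z j) ≤ p₀ * h) s)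
    rw [Fin.sum_cons, hsum, card_sdiff_of_subset (filter_subset _ _), hcard]
    omega
  · exact (hsparse w fun i => by simpa using hw i.succ).of_sdiff_cluster hh hmax
      (by simpa using hw 0)

lemma IsSparseAround.lt_dist_sort {n : ℕ} {z : Fin n → X} {h : ℝ} {w : X}
    (hw : IsSparseAround z univ h w) (k : Fin n) :
    ((k : ℝ) + 1) * h < dist w (z (Tuple.sort (fun j => dist w (z j)) k)) := by
  set σ := Tuple.sort fun j => dist w (z j)
  by_contra! hle
  have hsub : (Iic k).map σ.toEmbedding ⊆
      ({j | dist w (z j) ≤ ((k + 1 : ℕ) : ℝ) * h} : Finset (Fin n)) := by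
    intro j hj
    obtain ⟨i, hi, rfl⟩ := mem_map.1 hj
    simp only [mem_filter, mem_univ, true_and]
    push_cast
    exact (Tuple.monotone_sort (fun j => dist w (z j)) (mem_Iic.1 hi)).trans hle
  have := card_le_card hsub
  rw [card_map, Fin.card_Iic] at this
  exact (hw (k + 1) k.val.succ_pos).not_ge this

lemma IsSparseAround.factorial_mul_pow_lt_prod_dist {n : ℕ} (hn : 0 < n) {z : Fin n → X}
    {h : ℝ} (hh : 0 < h) {w : X} (hw : IsSparseAround z univ h w) :
    n ! * h ^ n < ∏ j, dist w (z j) := by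
  have : Nonempty (Fin n) := ⟨⟨0, hn⟩⟩
  calc (n ! : ℝ) * h ^ n = ∏ k : Fin n, ((k : ℝ) + 1) * h := by
        rw [prod_mul_distrib, prod_const, card_univ, Fintype.card_fin,
          Fin.prod_univ_eq_prod_range (fun i => (i : ℝ) + 1), ← prod_range_add_one_eq_factorial]
        push_cast; rfl
    _ < ∏ k, dist w (z (Tuple.sort (fun j => dist w (z j)) k)) :=
        prod_lt_prod_of_nonempty (fun k _ => by positivity) (fun k _ => hw.lt_dist_sort k)
          univ_nonempty
    _ = ∏ j, dist w (z j) := Equiv.prod_comp _ fun j => dist w (z j)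

lemma pow_le_factorial_mul_exp_one_mul_div_pow (n : ℕ) {δ : ℝ} (hδ : 0 ≤ δ) :
    δ ^ n ≤ n ! * (Real.exp 1 * δ / n) ^ n := by
  rcases Nat.eq_zero_or_pos n with rfl | hn
  · simp
  have hn' : (0 : ℝ) < n := by exact_mod_cast hn
  have key : (n : ℝ) ^ n ≤ n ! * Real.exp 1 ^ n := by
    have := Real.pow_div_factorial_le_exp n hn'.le n
    rwa [div_le_iff₀ (by positivity), ← Real.exp_one_pow, mul_comm] at this
  rw [div_pow, mul_pow, ← mul_div_assoc, le_div_iff₀ (by positivity)]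
  calc δ ^ n * n ^ n ≤ δ ^ n * (n ! * Real.exp 1 ^ n) := by gcongr
    _ = n ! * (Real.exp 1 ^ n * δ ^ n) := by ring

theorem boutroux_cartan_general (nq : ℕ) (hnq : 1 ≤ nq) (z : Fin nq → ℂ)
    (δ : ℝ) (hδ : 0 < δ) :
    ∃ (m : ℕ) (_ : m ≤ nq) (center : Fin m → ℂ) (r : Fin m → ℝ),
      (∀ i, 0 ≤ r i) ∧
      (∑ i, r i) ≤ 2 * Real.exp 1 * δ ∧
      ∀ w : ℂ, w ∉ ⋃ i, Metric.closedBall (center i) (r i) →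
        δ ^ nq < ∏ j : Fin nq, ‖w - z j‖ := by
  set h := Real.exp 1 * δ / nq
  have hh : 0 < h := by positivity
  obtain ⟨m, c, p, hp, hsum, hsparse⟩ := exists_disks_isSparseAround z hh.le univ
  rw [card_univ, Fintype.card_fin] at hsum
  refine ⟨m, ?_, c, fun i => 2 * p i * h, fun i => by positivity, ?_, fun w hw => ?_⟩
  · simpa [hsum] using sum_le_sum fun i (_ : i ∈ univ) => Nat.one_le_iff_ne_zero.2 (hp i).ne'
  · have hnh : (nq : ℝ) * h = Real.exp 1 * δ := mul_div_cancel₀ _ (by positivity)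
    rw [← sum_mul, ← mul_sum, ← Nat.cast_sum, hsum, mul_assoc, hnh, mul_assoc]
  · have hout : ∀ i, 2 * p i * h < dist w (c i) := by simpa using hw
    calc δ ^ nq ≤ nq ! * h ^ nq := pow_le_factorial_mul_exp_one_mul_div_pow nq hδ.le
      _ < ∏ j, dist w (z j) := (hsparse w hout).factorial_mul_pow_lt_prod_dist hnq hh
      _ = ∏ j, ‖w - z j‖ := by simp_rw [dist_eq_norm]

/-- Boutroux–Cartan lemma for the denominator of a Padé approximant: if
`Q(z) = q_{n_q} ∏_{j}(z - z_j)` with `q_{n_q} ≠ 0` has zeros `z_1, …, z_{n_q}`,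
then for any `δ > 0` there are at most `n_q` closed disks with radii summing to
at most `2eδ` such that outside their union `∏_j |z - z_j| > δ^{n_q}`. -/
theorem boutroux_cartan (nq : ℕ) (hnq : 1 ≤ nq) (z : Fin nq → ℂ)
    (Q : Polynomial ℂ) (q : ℂ) (hq : q ≠ 0)
    (hQ : Q = Polynomial.C q * ∏ j : Fin nq, (Polynomial.X - Polynomial.C (z j)))
    (δ : ℝ) (hδ : 0 < δ) :
    ∃ (m : ℕ) (_ : m ≤ nq) (center : Fin m → ℂ) (r : Fin m → ℝ),
      (∀ i, 0 ≤ r i) ∧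
      (∑ i, r i) ≤ 2 * Real.exp 1 * δ ∧
      ∀ w : ℂ, w ∉ ⋃ i, Metric.closedBall (center i) (r i) →
        δ ^ nq < ∏ j : Fin nq, ‖w - z j‖ :=
  boutroux_cartan_general nq hnq z δ hδ
end

section
/- Let (c_j) be the exact Chebyshev coefficients of f (absolutely summable), (c_{j,n}) the n-point quadrature coefficients satisfying the aliasing identity c_{m,n} = c_m + Σ_{j=1}^∞ (−1)^j (c_{2jn−m} + c_{2jn+m}) for 0 ≤ m < 2n. Let n_p, n_q ≥ 1 and d = n_p + n_q. If d = n − l with 1 ≤ l ≤ n, then Σ_{i=1}^{n_q} |c_{n_p+i,n}| ≤ Σ_{i=n_p+1}^∞ |c_i|. -/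
/-! On the `n`-point grid the Chebyshev polynomials `T_{2(j+1)n ∓ m}` alias onto `T_m`, so by the
triangle inequality `|c_{m,n}|` is at most `|c_m|` plus the sum of `|c_k|` over the alias indices
`k = 2(j+1)n ∓ m`. For `0 < m < n` these indices all exceed `n` and are pairwise distinct, also
across different `m`, since `2(j+1)n ∓ m` lies strictly inside the window `(2(j+1)n - n, 2(j+1)n + n)`
on the side given by the sign. Summing over `m = n_p + 1, …, n_p + n_q < n` therefore counts every
`|c_k|` with `k > n_p` at most once. -/

open Finset Function

theorem Finset.sum_tsum_le_tsum_of_injective {ι κ γ : Type*} {g : γ → ℝ} (hg0 : ∀ x, 0 ≤ g x)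
    (hg : Summable g) (s : Finset ι) (e : ι → κ → γ)
    (he : Injective fun p : s × κ => e p.1 p.2) :
    ∑ i ∈ s, ∑' k, g (e i k) ≤ ∑' x, g x := by
  have hsum : Summable fun p : s × κ => g (e p.1 p.2) := hg.comp_injective he
  calc ∑ i ∈ s, ∑' k, g (e i k) = ∑' p : s × κ, g (e p.1 p.2) := by
        rw [← s.tsum_subtype, hsum.tsum_prod' hsum.prod_factor]
    _ ≤ ∑' x, g x := tsum_comp_le_tsum_of_inj hg hg0 he

theorem abs_tsum_neg_one_pow_mul_add_le {x y : ℕ → ℝ} (hx : Summable fun j => |x j|)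
    (hy : Summable fun j => |y j|) :
    |∑' j, (-1 : ℝ) ^ (j + 1) * (x j + y j)| ≤ ∑' j, (|x j| + |y j|) := by
  have hle : ∀ j, |(-1 : ℝ) ^ (j + 1) * (x j + y j)| ≤ |x j| + |y j| := fun j => by
    rw [abs_mul, abs_pow, abs_neg, abs_one, one_pow, one_mul]
    exact abs_add_le _ _
  have habs : Summable fun j => |(-1 : ℝ) ^ (j + 1) * (x j + y j)| :=
    .of_nonneg_of_le (fun _ => abs_nonneg _) hle (hx.add hy)
  calc |∑' j, (-1 : ℝ) ^ (j + 1) * (x j + y j)|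
      ≤ ∑' j, |(-1 : ℝ) ^ (j + 1) * (x j + y j)| := by
        simpa only [Real.norm_eq_abs] using norm_tsum_le_tsum_norm (f := fun j =>
          (-1 : ℝ) ^ (j + 1) * (x j + y j)) (by simpa only [Real.norm_eq_abs] using habs)
    _ ≤ ∑' j, (|x j| + |y j|) := habs.tsum_le_tsum hle (hx.add hy)

theorem two_mul_le_two_mul_succ_mul (j n : ℕ) : 2 * n ≤ 2 * (j + 1) * n := by
  nlinarith

theorem two_mul_succ_mul_add_le {j j' : ℕ} (h : j < j') (n : ℕ) :
    2 * (j + 1) * n + 2 * n ≤ 2 * (j' + 1) * n := by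
  nlinarith

def aliasIdx (n m : ℕ) : ℕ × Bool → ℕ
  | (j, false) => 2 * (j + 1) * n - m
  | (j, true) => 2 * (j + 1) * n + m

section aliasIdx

variable {n m m' : ℕ}

theorem lt_aliasIdx (hm : m < n) (q : ℕ × Bool) : n < aliasIdx n m q := by
  obtain ⟨j, _ | _⟩ := q <;> simp only [aliasIdx] <;> have := two_mul_le_two_mul_succ_mul j n <;> omega

theorem aliasIdx_eq_aliasIdx {q q' : ℕ × Bool} (hm₀ : 0 < m) (hm : m < n) (hm₀' : 0 < m')
    (hm' : m' < n) (h : aliasIdx n m q = aliasIdx n m' q') : m = m' ∧ q = q' := by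
  obtain ⟨j, b⟩ := q
  obtain ⟨j', b'⟩ := q'
  rcases lt_trichotomy j j' with hj | rfl | hj
  · have := two_mul_succ_mul_add_le hj n
    cases b <;> cases b' <;> simp only [aliasIdx] at h <;> omega
  · have := two_mul_le_two_mul_succ_mul j n
    cases b <;> cases b' <;> simp only [aliasIdx] at h <;> first | exact ⟨by omega, rfl⟩ | omega
  · have := two_mul_succ_mul_add_le hj n
    cases b <;> cases b' <;> simp only [aliasIdx] at h <;> omega

theorem aliasIdx_injective (hm₀ : 0 < m) (hm : m < n) : Injective (aliasIdx n m) :=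
  fun _ _ h => (aliasIdx_eq_aliasIdx hm₀ hm hm₀ hm h).2

theorem tsum_aliasIdx {M : Type*} [AddCommMonoid M] [TopologicalSpace M] [ContinuousAdd M]
    [T3Space M] {f : ℕ → M} (hf : Summable fun q => f (aliasIdx n m q)) :
    ∑' q, f (aliasIdx n m q) = ∑' j, (f (2 * (j + 1) * n - m) + f (2 * (j + 1) * n + m)) := by
  rw [hf.tsum_prod' fun j => (hasSum_fintype _).summable]
  simp only [tsum_bool, aliasIdx]

theorem abs_le_abs_add_tsum_abs_aliasIdx {c : ℕ → ℝ} (hc : Summable fun k => |c k|)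
    (hm₀ : 0 < m) (hm : m < n) {x : ℝ}
    (hx : x = c m + ∑' j : ℕ, (-1 : ℝ) ^ (j + 1) *
      (c (2 * (j + 1) * n - m) + c (2 * (j + 1) * n + m))) :
    |x| ≤ |c m| + ∑' q, |c (aliasIdx n m q)| := by
  have hs : Summable fun q => |c (aliasIdx n m q)| := hc.comp_injective (aliasIdx_injective hm₀ hm)
  rw [hx, tsum_aliasIdx (f := fun k => |c k|) hs]
  have hsub : Summable fun j => |c (2 * (j + 1) * n - m)| := by
    simpa only [comp_def, aliasIdx] using hs.comp_injective (Prod.mk_left_injective false)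
  have hadd : Summable fun j => |c (2 * (j + 1) * n + m)| := by
    simpa only [comp_def, aliasIdx] using hs.comp_injective (Prod.mk_left_injective true)
  exact (abs_add_le _ _).trans (add_le_add_right (abs_tsum_neg_one_pow_mul_add_le hsub hadd) _)

theorem sum_tsum_aliasIdx_le_tsum_nat_add {g : ℕ → ℝ} (hg0 : ∀ k, 0 ≤ g k) (hg : Summable g)
    {a r : ℕ} (ha : 0 < a) (har : a + r ≤ n) :
    ∑ k ∈ range r, ∑' q, g (aliasIdx n (a + k) q) ≤ ∑' k, g (a + (k + r)) := by
  have he : ∀ k < r, ∀ q, a + (aliasIdx n (a + k) q - (a + r) + r) = aliasIdx n (a + k) q :=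
      fun k hk q => by
    have := lt_aliasIdx (n := n) (m := a + k) (by omega) q
    omega
  calc ∑ k ∈ range r, ∑' q, g (aliasIdx n (a + k) q)
      = ∑ k ∈ range r, ∑' q, g (a + (aliasIdx n (a + k) q - (a + r) + r)) :=
        sum_congr rfl fun k hk => tsum_congr fun q => by rw [he k (mem_range.1 hk)]
    _ ≤ ∑' k, g (a + (k + r)) := by
      refine sum_tsum_le_tsum_of_injective (fun _ => hg0 _)
        (hg.comp_injective ((add_right_injective a).comp (add_left_injective r))) _
        (fun k q => aliasIdx n (a + k) q - (a + r)) ?_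
      rintro ⟨⟨k, hk⟩, q⟩ ⟨⟨k', hk'⟩, q'⟩ h
      rw [mem_range] at hk hk'
      have h' : aliasIdx n (a + k) q = aliasIdx n (a + k') q' := by
        rw [← he k hk q, ← he k' hk' q']
        exact congrArg (fun x => a + (x + r)) h
      obtain ⟨hkk', rfl⟩ := aliasIdx_eq_aliasIdx (by omega) (by omega) (by omega) (by omega) h'
      simp only [Prod.mk.injEq, Subtype.mk.injEq, and_true]
      omega

end aliasIdx

theorem aliased_coeff_sum_bound_low_general (c c' : ℕ → ℝ) (n : ℕ) (hn : 1 ≤ n)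
    (hsum : Summable fun j => |c j|)
    (halias : ∀ m : ℕ, m < 2 * n →
      c' m = c m + ∑' j : ℕ, (-1 : ℝ) ^ (j + 1) *
        (c (2 * (j + 1) * n - m) + c (2 * (j + 1) * n + m)))
    (np nq : ℕ) (d : ℕ) (hdef : d = np + nq)
    (l : ℕ) (hl1 : 1 ≤ l) (hd : d = n - l) :
    (∑ i ∈ Finset.Icc 1 nq, |c' (np + i)|) ≤ ∑' i : ℕ, |c (np + 1 + i)| := by
  have hlt : np + nq < n := by omega
  rw [← Ico_add_one_right_eq_Icc, sum_Ico_eq_sum_range, Nat.add_sub_cancel]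
  simp only [← add_assoc]
  calc ∑ k ∈ range nq, |c' (np + 1 + k)|
      ≤ ∑ k ∈ range nq, (|c (np + 1 + k)| + ∑' q, |c (aliasIdx n (np + 1 + k) q)|) :=
        sum_le_sum fun k hk => by
          have := mem_range.1 hk
          exact abs_le_abs_add_tsum_abs_aliasIdx hsum (by omega) (by omega) (halias _ (by omega))
    _ = ∑ k ∈ range nq, |c (np + 1 + k)| +
          ∑ k ∈ range nq, ∑' q, |c (aliasIdx n (np + 1 + k) q)| := sum_add_distrib
    _ ≤ ∑ k ∈ range nq, |c (np + 1 + k)| + ∑' k, |c (np + 1 + (k + nq))| := by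
        gcongr
        exact sum_tsum_aliasIdx_le_tsum_nat_add (fun _ => abs_nonneg _) hsum (by omega) (by omega)
    _ = ∑' k, |c (np + 1 + k)| :=
        (hsum.comp_injective (add_right_injective _)).sum_add_tsum_nat_add nq

/-- Bound on the aliased coefficient sum, case `d = n_p + n_q = n - l`,
`1 ≤ l ≤ n`: `Σ_{i=1}^{n_q} |c_{n_p+i,n}| ≤ Σ_{i=n_p+1}^∞ |c_i|`. -/
theorem aliased_coeff_sum_bound_low (c c' : ℕ → ℝ) (n : ℕ) (hn : 1 ≤ n)
    (hsum : Summable fun j => |c j|)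
    (halias : ∀ m : ℕ, m < 2 * n →
      c' m = c m + ∑' j : ℕ, (-1 : ℝ) ^ (j + 1) *
        (c (2 * (j + 1) * n - m) + c (2 * (j + 1) * n + m)))
    (np nq : ℕ) (hnp : 1 ≤ np) (hnq : 1 ≤ nq) (d : ℕ) (hdef : d = np + nq)
    (l : ℕ) (hl1 : 1 ≤ l) (hln : l ≤ n) (hd : d = n - l) :
    (∑ i ∈ Finset.Icc 1 nq, |c' (np + i)|) ≤ ∑' i : ℕ, |c (np + 1 + i)| :=
  aliased_coeff_sum_bound_low_general c c' n hn hsum halias np nq d hdef l hl1 hd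
end

section
/- With the same setup, if d = n_p + n_q = n + l with 0 ≤ l ≤ n − 1, then Σ_{i=1}^{n_q} |c_{n_p+i,n}| ≤ 2 Σ_{i=n*}^∞ |c_i|, where n* = min{n_p + 1, n − l}. -/
/-!
Each aliased coefficient `c'_M` with `M < 2n` is bounded by the `ℓ¹` mass of the exact
coefficients at the indices `2jn + M` and `2(j+1)n - M`. For distinct `M < 2n` these index
families are pairwise disjoint (they are determined by division with remainder by `2n`), so
summing over `M ∈ [n_p + 1, n + l]` each exact coefficient is counted at most once per family.
The first family lies above `n_p`, the second above `2n - (n + l) = n - l`; hence each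
contributes at most the tail `Σ_{i ≥ n*} |c_i|`.
-/

open Function Set

theorem injOn_two_mul_mul_add (n : ℕ) :
    InjOn (uncurry fun M j => 2 * j * n + M) (Iio (2 * n) ×ˢ univ) := by
  rintro ⟨M, j⟩ ⟨hM, -⟩ ⟨M', j'⟩ ⟨hM', -⟩ h
  have hpos : 0 < 2 * n := by simp only [mem_Iio] at hM; omega
  obtain ⟨hj, hr⟩ := (Nat.div_mod_unique hpos).2
    (⟨by ring, hM⟩ : M + 2 * n * j = 2 * j * n + M ∧ M < 2 * n)
  obtain ⟨hj', hr'⟩ := (Nat.div_mod_unique hpos).2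
    (⟨by ring, hM'⟩ : M' + 2 * n * j' = 2 * j' * n + M' ∧ M' < 2 * n)
  rw [uncurry_apply_pair, uncurry_apply_pair] at h
  rw [h] at hj hr
  exact Prod.ext (hr.symm.trans hr') (hj.symm.trans hj')

theorem injOn_two_mul_succ_mul_sub (n : ℕ) :
    InjOn (uncurry fun M j => 2 * (j + 1) * n - M) (Iio (2 * n) ×ˢ univ) := by
  rintro ⟨M, j⟩ ⟨hM, -⟩ ⟨M', j'⟩ ⟨hM', -⟩ h
  simp only [mem_Iio, uncurry_apply_pair] at hM hM' h
  have hsucc : ∀ k, 2 * (k + 1) * n = 2 * k * n + 2 * n := fun k => by ring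
  rw [hsucc, hsucc] at h
  -- reflect `M ↦ 2n - 1 - M` to land in the first family
  have := injOn_two_mul_mul_add n (x₁ := (2 * n - 1 - M, j)) (x₂ := (2 * n - 1 - M', j'))
    ⟨by simp only [mem_Iio]; omega, trivial⟩ ⟨by simp only [mem_Iio]; omega, trivial⟩
    (by simp only [uncurry_apply_pair]; omega)
  simp only [Prod.mk.injEq] at this ⊢
  omega

theorem abs_aliased_coeff_le {c : ℕ → ℝ} (hsum : Summable fun j => |c j|) {n M : ℕ}
    (hM : M < 2 * n) :
    |c M + ∑' j : ℕ, (-1 : ℝ) ^ (j + 1) *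
        (c (2 * (j + 1) * n - M) + c (2 * (j + 1) * n + M))| ≤
      ∑' j : ℕ, |c (2 * j * n + M)| + ∑' j : ℕ, |c (2 * (j + 1) * n - M)| := by
  have hmem : ∀ j : ℕ, (M, j) ∈ Iio (2 * n) ×ˢ (univ : Set ℕ) := fun _ => ⟨hM, trivial⟩
  have hlow : Summable fun j => |c (2 * j * n + M)| := hsum.comp_injective fun j j' h =>
    congrArg Prod.snd (injOn_two_mul_mul_add n (hmem j) (hmem j') h)
  have hhigh : Summable fun j => |c (2 * (j + 1) * n + M)| :=
    hsum.comp_injective fun j j' h =>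
      Nat.succ_injective (congrArg Prod.snd (injOn_two_mul_mul_add n (hmem _) (hmem _) h))
  have hrefl : Summable fun j => |c (2 * (j + 1) * n - M)| := hsum.comp_injective fun j j' h =>
    congrArg Prod.snd (injOn_two_mul_succ_mul_sub n (hmem j) (hmem j') h)
  have hterm : ∀ j : ℕ, ‖(-1 : ℝ) ^ (j + 1) *
      (c (2 * (j + 1) * n - M) + c (2 * (j + 1) * n + M))‖ ≤
        |c (2 * (j + 1) * n - M)| + |c (2 * (j + 1) * n + M)| := fun j => by
    simpa only [Real.norm_eq_abs, abs_mul, abs_pow, abs_neg, abs_one, one_pow, one_mul]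
      using abs_add_le _ _
  calc _ ≤ |c M| + ‖∑' j : ℕ, (-1 : ℝ) ^ (j + 1) *
          (c (2 * (j + 1) * n - M) + c (2 * (j + 1) * n + M))‖ := abs_add_le _ _
    _ ≤ |c M| + (∑' j : ℕ, |c (2 * (j + 1) * n - M)| +
          ∑' j : ℕ, |c (2 * (j + 1) * n + M)|) := by
        gcongr
        exact tsum_of_norm_bounded (hrefl.hasSum.add hhigh.hasSum) hterm
    _ = _ := by
        rw [hlow.tsum_eq_zero_add, mul_zero, zero_mul, zero_add]
        ring

theorem Finset.sum_tsum_le_tsum_of_injOn {ι β : Type*} {f : β → ℝ} (hf : ∀ b, 0 ≤ f b)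
    (hsum : Summable f) (s : Finset ι) {φ : ι → ℕ → β}
    (hφ : InjOn (uncurry φ) ((s : Set ι) ×ˢ Set.univ)) :
    ∑ m ∈ s, ∑' j, f (φ m j) ≤ ∑' b, f b := by
  have hinj : Injective fun p : s × ℕ => φ p.1 p.2 := fun p q h => by
    have := hφ (mk_mem_prod (Finset.mem_coe.2 p.1.2) (Set.mem_univ p.2))
      (mk_mem_prod (Finset.mem_coe.2 q.1.2) (Set.mem_univ q.2)) h
    simp only [Prod.mk.injEq] at this
    exact Prod.ext (Subtype.ext this.1) this.2
  have hrows : ∀ m : s, Summable fun j => f (φ m j) := fun m =>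
    hsum.comp_injective fun j j' h => congrArg Prod.snd (hinj (a₁ := (m, j)) (a₂ := (m, j')) h)
  calc ∑ m ∈ s, ∑' j, f (φ m j) = ∑' p : s × ℕ, f (φ p.1 p.2) := by
        rw [← Finset.tsum_subtype]
        exact ((hsum.comp_injective hinj).tsum_prod' hrows).symm
    _ ≤ ∑' b, f b := tsum_comp_le_tsum_of_inj hsum hf hinj

theorem Finset.sum_tsum_le_tsum_nat_add {ι : Type*} {f : ℕ → ℝ} (hf : ∀ i, 0 ≤ f i)
    (hsum : Summable f) (s : Finset ι) {φ : ι → ℕ → ℕ}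
    (hφ : InjOn (uncurry φ) ((s : Set ι) ×ˢ Set.univ)) {N : ℕ}
    (hN : ∀ m ∈ s, ∀ j, N ≤ φ m j) :
    ∑ m ∈ s, ∑' j, f (φ m j) ≤ ∑' i, f (N + i) := by
  have hshift : InjOn (uncurry fun m j => φ m j - N) ((s : Set ι) ×ˢ Set.univ) := by
    rintro ⟨m, j⟩ ⟨hm, -⟩ ⟨m', j'⟩ ⟨hm', -⟩ h
    have := hN m hm j
    have := hN m' hm' j'
    exact hφ ⟨hm, trivial⟩ ⟨hm', trivial⟩ (by simp only [uncurry_apply_pair] at h ⊢; omega)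
  calc ∑ m ∈ s, ∑' j, f (φ m j) = ∑ m ∈ s, ∑' j, f (N + (φ m j - N)) :=
        Finset.sum_congr rfl fun m hm => tsum_congr fun j => by
          rw [Nat.add_sub_cancel' (hN m hm j)]
    _ ≤ ∑' i, f (N + i) := Finset.sum_tsum_le_tsum_of_injOn (fun _ => hf _)
        (hsum.comp_injective (add_right_injective N)) s hshift

theorem aliased_coeff_sum_bound_high_general (c c' : ℕ → ℝ) (n : ℕ)
    (hsum : Summable fun j => |c j|)
    (halias : ∀ m : ℕ, m < 2 * n →
      c' m = c m + ∑' j : ℕ, (-1 : ℝ) ^ (j + 1) *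
        (c (2 * (j + 1) * n - m) + c (2 * (j + 1) * n + m)))
    (np nq : ℕ) (d : ℕ) (hdef : d = np + nq)
    (l : ℕ) (hln : l ≤ n - 1) (hd : d = n + l) :
    (∑ i ∈ Finset.Icc 1 nq, |c' (np + i)|) ≤
      2 * ∑' i : ℕ, |c (min (np + 1) (n - l) + i)| := by
  have hreindex : ∑ i ∈ Finset.Icc 1 nq, |c' (np + i)| =
      ∑ M ∈ Finset.Icc (np + 1) (np + nq), |c' M| := by
    rw [← Finset.map_add_left_Icc, Finset.sum_map]; rfl
  rw [hreindex]
  set s := Finset.Icc (np + 1) (np + nq)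
  have hbound : ∀ M ∈ s, M < 2 * n := fun M hM => by
    simp only [s, Finset.mem_Icc] at hM; omega
  have hs : (s : Set ℕ) ×ˢ (univ : Set ℕ) ⊆ Iio (2 * n) ×ˢ univ :=
    prod_mono (fun M hM => hbound M hM) subset_rfl
  have hlow : ∀ M ∈ s, ∀ j, min (np + 1) (n - l) ≤ 2 * j * n + M := fun M hM j => by
    simp only [s, Finset.mem_Icc] at hM; omega
  have hrefl : ∀ M ∈ s, ∀ j, min (np + 1) (n - l) ≤ 2 * (j + 1) * n - M := fun M hM j => by
    have : 2 * (j + 1) * n = 2 * j * n + 2 * n := by ring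
    simp only [s, Finset.mem_Icc] at hM; omega
  have habs : ∀ i, 0 ≤ |c i| := fun _ => abs_nonneg _
  calc ∑ M ∈ s, |c' M|
    _ ≤ ∑ M ∈ s, (∑' j, |c (2 * j * n + M)| + ∑' j, |c (2 * (j + 1) * n - M)|) :=
        Finset.sum_le_sum fun M hM =>
          halias M (hbound M hM) ▸ abs_aliased_coeff_le hsum (hbound M hM)
    _ = ∑ M ∈ s, ∑' j, |c (2 * j * n + M)| + ∑ M ∈ s, ∑' j, |c (2 * (j + 1) * n - M)| :=
        Finset.sum_add_distrib
    _ ≤ _ := by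
        rw [two_mul]
        exact add_le_add
          (s.sum_tsum_le_tsum_nat_add habs hsum ((injOn_two_mul_mul_add n).mono hs) hlow)
          (s.sum_tsum_le_tsum_nat_add habs hsum ((injOn_two_mul_succ_mul_sub n).mono hs) hrefl)

/-- Bound on the aliased coefficient sum, case `d = n_p + n_q = n + l`,
`0 ≤ l ≤ n - 1`: `Σ_{i=1}^{n_q} |c_{n_p+i,n}| ≤ 2 Σ_{i=n*}^∞ |c_i|` with
`n* = min{n_p + 1, n - l}`. -/
theorem aliased_coeff_sum_bound_high (c c' : ℕ → ℝ) (n : ℕ) (hn : 1 ≤ n)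
    (hsum : Summable fun j => |c j|)
    (halias : ∀ m : ℕ, m < 2 * n →
      c' m = c m + ∑' j : ℕ, (-1 : ℝ) ^ (j + 1) *
        (c (2 * (j + 1) * n - m) + c (2 * (j + 1) * n + m)))
    (np nq : ℕ) (hnp : 1 ≤ np) (hnq : 1 ≤ nq) (d : ℕ) (hdef : d = np + nq)
    (l : ℕ) (hln : l ≤ n - 1) (hd : d = n + l) :
    (∑ i ∈ Finset.Icc 1 nq, |c' (np + i)|) ≤
      2 * ∑' i : ℕ, |c (min (np + 1) (n - l) + i)| :=
  aliased_coeff_sum_bound_high_general c c' n hsum halias np nq d hdef l hln hd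
end

section
/- Let n, n_q, j be integers with 1 ≤ n_q < n − 1 and 0 ≤ j ≤ n − n_q − 1, and let (c_{k,n}) satisfy the anti-symmetry relations c_{n+m,n} = −c_{|n−m|,n} for 1 ≤ m ≤ 2n and c_{n,n} = 0. Define the n_q × (n_q+1) Toeplitz matrices A^{(d)} with entries A^{(d)}_{r,s} = c_{d+r−s+1,n} for d = n−j−1 and d = n+j. Then A^{(n+j)} = −R_{n_q} A^{(n−j−1)} R_{n_q+1}, where R_m is the m×m anti-diagonal flip matrix. -/
/-- The `m × m` anti-diagonal flip matrix. -/
def flipMatrix (m : ℕ) : Matrix (Fin m) (Fin m) ℝ :=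
  fun i j => if (i : ℕ) + (j : ℕ) = m - 1 then 1 else 0

/-- The `n_q × (n_q+1)` Toeplitz matrix with entries `c_{d+r-s+1,n}`
(`r = 1..n_q`, `s = 1..n_q+1`, zero-based here). -/
def toeplitzPade (c : ℕ → ℝ) (nq d : ℕ) : Matrix (Fin nq) (Fin (nq + 1)) ℝ :=
  fun r s => c (d + (r : ℕ) + 1 - (s : ℕ))

lemma flip_mul {a : ℕ} {β : Type*} (A : Matrix (Fin a) β ℝ) (i : Fin a) (j : β) :
    (flipMatrix a * A) i j = A i.rev j := by
  rw [Matrix.mul_apply]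
  rw [Finset.sum_eq_single i.rev]
  · simp [flipMatrix, Fin.rev]
    intro h; exfalso; omega
  · intro b _ hb
    have : (i : ℕ) + (b : ℕ) ≠ a - 1 := by
      intro h
      apply hb
      have := i.isLt; have := b.isLt
      apply Fin.ext
      simp [Fin.rev]; omega
    simp [flipMatrix, this]
  · simp

lemma mul_flip {a : ℕ} {β : Type*} [Fintype β] (A : Matrix β (Fin a) ℝ) (i : β) (j : Fin a) :
    (A * flipMatrix a) i j = A i j.rev := by
  rw [Matrix.mul_apply]
  rw [Finset.sum_eq_single j.rev]
  · simp [flipMatrix, Fin.rev]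
    intro h; exfalso; omega
  · intro b _ hb
    have : (b : ℕ) + (j : ℕ) ≠ a - 1 := by
      intro h
      apply hb
      have := j.isLt; have := b.isLt
      apply Fin.ext
      simp [Fin.rev]; omega
    simp [flipMatrix, this]
  · simp

/-- Flip symmetry of the Padé–Chebyshev Toeplitz matrices:
if `c_{n+m,n} = -c_{|n-m|,n}` for `1 ≤ m ≤ 2n` and `c_{n,n} = 0`, then
`A^{(n+j)} = -R_{n_q} A^{(n-j-1)} R_{n_q+1}`. -/
theorem toeplitz_flip_symmetry (n nq j : ℕ) (hnq : 1 ≤ nq) (hnq' : nq < n - 1)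
    (hj : j ≤ n - nq - 1) (c : ℕ → ℝ)
    (hanti : ∀ m : ℕ, 1 ≤ m → m ≤ 2 * n →
      c (n + m) = - c (((n : ℤ) - (m : ℤ)).natAbs))
    (hzero : c n = 0) :
    toeplitzPade c nq (n + j) =
      - (flipMatrix nq * toeplitzPade c nq (n - j - 1) * flipMatrix (nq + 1)) := by
  ext r s
  rw [Matrix.neg_apply, mul_flip, flip_mul]
  unfold toeplitzPade
  have hr := r.isLt
  have hs := s.isLt
  have hrr : (r.rev : ℕ) = nq - 1 - (r : ℕ) := by simp [Fin.rev]; omega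
  have hsr : (s.rev : ℕ) = nq - (s : ℕ) := by simp [Fin.rev]
  rw [hrr, hsr]
  -- target: c (n + j + r + 1 - s) = -(c (n - j - 1 + (nq-1-r) + 1 - (nq - s)))
  rcases lt_trichotomy ((s : ℕ)) (j + (r : ℕ) + 1) with h | h | h
  · set m := j + (r : ℕ) + 1 - (s : ℕ) with hm
    have h1 : 1 ≤ m := by omega
    have h2 : m ≤ 2 * n := by omega
    have key := hanti m h1 h2
    have e1 : n + j + (r : ℕ) + 1 - (s : ℕ) = n + m := by omega
    have e2 : (((n : ℤ) - (m : ℤ)).natAbs) = n - j - 1 + (nq - 1 - (r : ℕ)) + 1 - (nq - (s : ℕ)) := by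
      omega
    rw [e1, key, e2]
  · have e1 : n + j + (r : ℕ) + 1 - (s : ℕ) = n := by omega
    have e2 : n - j - 1 + (nq - 1 - (r : ℕ)) + 1 - (nq - (s : ℕ)) = n := by omega
    rw [e1, e2, hzero]; ring
  · set m := (s : ℕ) - (j + (r : ℕ) + 1) with hm
    have h1 : 1 ≤ m := by omega
    have h2 : m ≤ 2 * n := by omega
    have key := hanti m h1 h2
    have e1 : n - j - 1 + (nq - 1 - (r : ℕ)) + 1 - (nq - (s : ℕ)) = n + m := by omega
    have e2 : (((n : ℤ) - (m : ℤ)).natAbs) = n + j + (r : ℕ) + 1 - (s : ℕ) := by omega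
    rw [e1, key, e2]; ring
end

section
/- Under the same anti-symmetry hypotheses, a vector x ∈ ℝ^{n_q+1} lies in the kernel of the Toeplitz matrix A^{(n+j)} if and only if R_{n_q+1} x lies in the kernel of A^{(n−j−1)}. Consequently the denominator coefficient vectors of the Padé–Chebyshev type approximants of orders [(n−j−1)/n_q] and [(n+j)/n_q] are related by q^{n−j−1} = R_{n_q+1} q^{n+j}. -/
/-!
The flip matrix is the permutation matrix of `Fin.rev`, so multiplying by it reverses columns
(on the right) or rows (on the left). Reversing both in `A^{(e)}` sends the coefficient index `k`
to `2n - k` when `d + e + 1 = 2n`, and the anti-symmetry `c_{2n-k} = -c_k` then gives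
`A^{(d)} R_{n_q+1} = -R_{n_q} A^{(e)}`. As the flips are invertible, `A^{(e)} x = 0` iff
`A^{(d)} (R_{n_q+1} x) = 0`; take `d = n - j - 1`, `e = n + j`.
-/

open Matrix

theorem flipMatrix_eq_permMatrix (m : ℕ) : flipMatrix m = Fin.revPerm.permMatrix ℝ := by
  ext i j
  simp only [flipMatrix, PEquiv.toMatrix_apply, Equiv.toPEquiv_apply, Option.mem_def,
    Option.some.injEq, Fin.revPerm_apply, Fin.ext_iff, Fin.val_rev]
  congr 1
  exact propext (by omega)

theorem flipMatrix_mulVec_eq_zero_iff {m : ℕ} {x : Fin m → ℝ} :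
    flipMatrix m *ᵥ x = 0 ↔ x = 0 := by
  rw [flipMatrix_eq_permMatrix, permMatrix_mulVec]
  exact Fin.revPerm.surjective.injective_comp_right.eq_iff' rfl

theorem apply_eq_neg_apply_of_add_eq_two_mul {G : Type*} [AddGroup G] {n : ℕ} {c : ℕ → G}
    (hanti : ∀ m : ℕ, 1 ≤ m → m ≤ 2 * n → c (n + m) = -c ((n : ℤ) - m).natAbs)
    (hzero : c n = 0) (a b : ℕ) (ha : 0 < a) (hb : 0 < b) (hab : a + b = 2 * n) :
    c a = -c b := by
  rcases lt_trichotomy a n with h | rfl | h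
  · obtain ⟨k, rfl⟩ : ∃ k, b = n + k := ⟨n - a, by omega⟩
    rw [hanti k (by omega) (by omega), neg_neg]
    congr
    omega
  · obtain rfl : b = a := by omega
    rw [hzero, neg_zero]
  · obtain ⟨k, rfl⟩ : ∃ k, a = n + k := ⟨a - n, by omega⟩
    rw [hanti k (by omega) (by omega)]
    congr
    omega

theorem toeplitzPade_mul_flipMatrix {n nq d e : ℕ} {c : ℕ → ℝ}
    (hc : ∀ a b, 0 < a → 0 < b → a + b = 2 * n → c a = -c b)
    (hde : d + e + 1 = 2 * n) (hd : nq ≤ d) (he : nq ≤ e) :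
    toeplitzPade c nq d * flipMatrix (nq + 1) = -(flipMatrix nq * toeplitzPade c nq e) := by
  rw [flipMatrix_eq_permMatrix, flipMatrix_eq_permMatrix, PEquiv.mul_toMatrix_toPEquiv,
    PEquiv.toMatrix_toPEquiv_mul]
  ext r s
  have hr := r.isLt
  have hs := s.isLt
  simp only [toeplitzPade, submatrix_apply, Matrix.neg_apply, id, Fin.revPerm_symm,
    Fin.revPerm_apply, Fin.val_rev]
  exact hc _ _ (by omega) (by omega) (by omega)

theorem toeplitz_flip_kernel_general (n nq j : ℕ) (hnq' : nq < n - 1)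
    (hj : j ≤ n - nq - 1) (c : ℕ → ℝ)
    (hanti : ∀ m : ℕ, 1 ≤ m → m ≤ 2 * n →
      c (n + m) = - c (((n : ℤ) - (m : ℤ)).natAbs))
    (hzero : c n = 0) :
    (∀ x : Fin (nq + 1) → ℝ,
      (toeplitzPade c nq (n + j)).mulVec x = 0 ↔
        (toeplitzPade c nq (n - j - 1)).mulVec ((flipMatrix (nq + 1)).mulVec x) = 0) ∧
    (∀ q : Fin (nq + 1) → ℝ, q ≠ 0 →
      (toeplitzPade c nq (n + j)).mulVec q = 0 →
        (flipMatrix (nq + 1)).mulVec q ≠ 0 ∧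
        (toeplitzPade c nq (n - j - 1)).mulVec ((flipMatrix (nq + 1)).mulVec q) = 0) := by
  have hflip := toeplitzPade_mul_flipMatrix (d := n - j - 1) (e := n + j) (nq := nq)
    (apply_eq_neg_apply_of_add_eq_two_mul hanti hzero) (by omega) (by omega) (by omega)
  have hker (x : Fin (nq + 1) → ℝ) :
      toeplitzPade c nq (n + j) *ᵥ x = 0 ↔
        toeplitzPade c nq (n - j - 1) *ᵥ (flipMatrix (nq + 1) *ᵥ x) = 0 := by
    rw [mulVec_mulVec, hflip, neg_mulVec, ← mulVec_mulVec, neg_eq_zero,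
      flipMatrix_mulVec_eq_zero_iff]
  exact ⟨hker, fun q hq hq0 => ⟨flipMatrix_mulVec_eq_zero_iff.not.mpr hq, (hker q).mp hq0⟩⟩

/-- Kernel correspondence under the flip: `x ∈ ker A^{(n+j)}` iff
`R_{n_q+1} x ∈ ker A^{(n-j-1)}`; consequently the denominator coefficient
vectors of the Padé–Chebyshev approximants of orders `[(n-j-1)/n_q]` and
`[(n+j)/n_q]` are related by `q^{n-j-1} = R_{n_q+1} q^{n+j}`. -/
theorem toeplitz_flip_kernel (n nq j : ℕ) (hnq : 1 ≤ nq) (hnq' : nq < n - 1)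
    (hj : j ≤ n - nq - 1) (c : ℕ → ℝ)
    (hanti : ∀ m : ℕ, 1 ≤ m → m ≤ 2 * n →
      c (n + m) = - c (((n : ℤ) - (m : ℤ)).natAbs))
    (hzero : c n = 0) :
    (∀ x : Fin (nq + 1) → ℝ,
      (toeplitzPade c nq (n + j)).mulVec x = 0 ↔
        (toeplitzPade c nq (n - j - 1)).mulVec ((flipMatrix (nq + 1)).mulVec x) = 0) ∧
    (∀ q : Fin (nq + 1) → ℝ, q ≠ 0 →
      (toeplitzPade c nq (n + j)).mulVec q = 0 →
        (flipMatrix (nq + 1)).mulVec q ≠ 0 ∧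
        (toeplitzPade c nq (n - j - 1)).mulVec ((flipMatrix (nq + 1)).mulVec q) = 0) :=
  toeplitz_flip_kernel_general n nq j hnq' hj c hanti hzero
end
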